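/- The Neumann Kac kernel is a probability kernel: for every u in the closed cylinder [-1,1]×T^{d-1}, the integral over v ∈ Λ of J^neum(u,v) dv equals 1. -/

import Mathlib

/-!
The reflections `v ↦ (2 - v₁, v₂)` and `v ↦ (-2 - v₁, v₂)` preserve Lebesgue measure on the
first factor, hence the product measure. They carry the strip `(-1, 1) × V` onto the strips
`(1, 3) × V` and `(-3, -1) × V`, so the integral of `J^neum(u, ·)` over the strip is the
integral of `J(u, ·)` over `(-3, 3) × V`, the lines `v₁ = ±1` being null. For `|u₁| ≤ 1` the
kernel `J(u, ·)` vanishes outside this larger strip, so the integral is `∫ J(u, ·) = 1`.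
-/

open MeasureTheory Set

namespace MeasureTheory

section ProdMap

variable {α β E : Type*} [MeasurableSpace α] [MeasurableSpace β] [NormedAddCommGroup E]
  {μ : Measure α} {f : α → α}

-- If `x ↦ ν.map (Prod.mk x)` is not a.e.-measurable then `μ.prod ν = 0`, so `ν` need not be
-- s-finite.
theorem Measure.map_prodMap_id_prod (hf : MeasurePreserving f μ μ) (ν : Measure β) :
    (μ.prod ν).map (Prod.map f id) = μ.prod ν := by
  set κ : α → Measure (α × β) := fun x => ν.map (Prod.mk x)
  have hmap : Measurable (Prod.map f (id : β → β)) := hf.measurable.prodMap measurable_id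
  have hκf : Measure.map (Prod.map f id) ∘ κ = κ ∘ f := by
    funext x
    simp only [κ, Function.comp_apply, Measure.map_map hmap measurable_prodMk_left]
    rfl
  rw [Measure.prod_def, Measure.bind]
  by_cases hκ : AEMeasurable κ μ
  · have hκ' : AEMeasurable κ (μ.map f) := by rwa [hf.map_eq]
    rw [← Measure.join_map_map hmap, AEMeasurable.map_map_of_aemeasurable
        (Measure.measurable_map _ hmap).aemeasurable hκ, hκf,
      ← AEMeasurable.map_map_of_aemeasurable hκ' hf.aemeasurable, hf.map_eq]
  · rw [Measure.map_of_not_aemeasurable hκ, Measure.join_zero, Measure.map_zero]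

theorem MeasurePreserving.prodMap_id (hf : MeasurePreserving f μ μ) (ν : Measure β) :
    MeasurePreserving (Prod.map f id) (μ.prod ν) (μ.prod ν) :=
  ⟨hf.measurable.prodMap measurable_id, Measure.map_prodMap_id_prod hf ν⟩

theorem MeasurePreserving.setIntegral_prod_comp_fst [NormedSpace ℝ E]
    (hf : MeasurePreserving f μ μ) (hfe : MeasurableEmbedding f) (ν : Measure β)
    (g : α × β → E) (s : Set α) :
    ∫ v in Prod.fst ⁻¹' (f ⁻¹' s), g (f v.1, v.2) ∂μ.prod ν
      = ∫ v in Prod.fst ⁻¹' s, g v ∂μ.prod ν :=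
  (hf.prodMap_id ν).setIntegral_preimage_emb (hfe.prodMap MeasurableEmbedding.id) g
    (Prod.fst ⁻¹' s)

theorem MeasurePreserving.integrable_prod_comp_fst (hf : MeasurePreserving f μ μ)
    (hfe : MeasurableEmbedding f) {ν : Measure β} {g : α × β → E}
    (hg : Integrable g (μ.prod ν)) : Integrable (fun v => g (f v.1, v.2)) (μ.prod ν) :=
  ((hf.prodMap_id ν).integrable_comp_emb (hfe.prodMap MeasurableEmbedding.id)).mpr hg

end ProdMap

section Strip

variable {β E : Type*} [MeasurableSpace β] [NormedAddCommGroup E] (μ : Measure ℝ)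
  (ν : Measure β)

theorem setIntegral_fst_Ioo_comp_const_sub [NormedSpace ℝ E] [μ.IsAddLeftInvariant]
    [μ.IsNegInvariant] (g : ℝ × β → E) (c a b : ℝ) :
    ∫ v in Prod.fst ⁻¹' Ioo a b, g (c - v.1, v.2) ∂μ.prod ν
      = ∫ v in Prod.fst ⁻¹' Ioo (c - b) (c - a), g v ∂μ.prod ν := by
  have h := (μ.measurePreserving_sub_left c).setIntegral_prod_comp_fst
    (measurableEmbedding_subLeft c) ν g (Ioo (c - b) (c - a))
  rwa [preimage_const_sub_Ioo, sub_sub_cancel, sub_sub_cancel] at h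

theorem integrable_comp_const_sub_fst [μ.IsAddLeftInvariant] [μ.IsNegInvariant]
    {g : ℝ × β → E} (hg : Integrable g (μ.prod ν)) (c : ℝ) :
    Integrable (fun v => g (c - v.1, v.2)) (μ.prod ν) :=
  (μ.measurePreserving_sub_left c).integrable_prod_comp_fst (measurableEmbedding_subLeft c) hg

theorem setIntegral_fst_Ioo_add_setIntegral_fst_Ioo [NormedSpace ℝ E] [NullSingletonClass μ]
    {g : ℝ × β → E} (hg : Integrable g (μ.prod ν)) {a b c : ℝ} (hab : a ≤ b) (hbc : b ≤ c) :
    ∫ v in Prod.fst ⁻¹' Ioo a b, g v ∂μ.prod ν + ∫ v in Prod.fst ⁻¹' Ioo b c, g v ∂μ.prod ν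
      = ∫ v in Prod.fst ⁻¹' Ioo a c, g v ∂μ.prod ν := by
  have hIoc (x y : ℝ) : Prod.fst ⁻¹' Ioo x y =ᵐ[μ.prod ν] Prod.fst ⁻¹' Ioc x y :=
    Measure.quasiMeasurePreserving_fst.preimage_ae_eq Ioo_ae_eq_Ioc
  rw [setIntegral_congr_set (hIoc a b), setIntegral_congr_set (hIoc b c),
    setIntegral_congr_set (hIoc a c), ← setIntegral_union _ (measurable_fst measurableSet_Ioc)
      hg.integrableOn hg.integrableOn, ← preimage_union, Ioc_union_Ioc_eq_Ioc hab hbc]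
  exact (Ioc_disjoint_Ioc_of_le le_rfl).preimage _

theorem setIntegral_fst_Ioo_add_reflections [NormedSpace ℝ E] [μ.IsAddLeftInvariant]
    [μ.IsNegInvariant] [NullSingletonClass μ] {g : ℝ × β → E} (hg : Integrable g (μ.prod ν))
    {a b : ℝ} (hab : a ≤ b) :
    ∫ v in Prod.fst ⁻¹' Ioo a b, (g v + g (2 * b - v.1, v.2) + g (2 * a - v.1, v.2)) ∂μ.prod ν
      = ∫ v in Prod.fst ⁻¹' Ioo (2 * a - b) (2 * b - a), g v ∂μ.prod ν := by
  have hrefl (c : ℝ) := (integrable_comp_const_sub_fst μ ν hg c).integrableOn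
    (s := Prod.fst ⁻¹' Ioo a b)
  rw [integral_add (by exact hg.integrableOn.add (hrefl (2 * b))) (hrefl _),
    integral_add hg.integrableOn (hrefl _), setIntegral_fst_Ioo_comp_const_sub,
    setIntegral_fst_Ioo_comp_const_sub, add_comm, ← add_assoc, show 2 * a - a = a by ring,
    show 2 * b - b = b by ring,
    setIntegral_fst_Ioo_add_setIntegral_fst_Ioo μ ν hg (by linarith) (by linarith),
    setIntegral_fst_Ioo_add_setIntegral_fst_Ioo μ ν hg (by linarith) (by linarith)]

end Strip

end MeasureTheory

theorem neumann_kac_probability_kernel_general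
    {V : Type*} [AddCommGroup V] [MeasureSpace V]
    (J : ℝ × V → ℝ × V → ℝ)
    (htrans : ∀ u v, J u v = J 0 (v - u))
    (hrange : ∀ w : ℝ × V, 1 < |w.1| → J 0 w = 0)
    (hprob : ∀ u, (∫ v, J u v) = 1)
    (Jneum : ℝ × V → ℝ × V → ℝ)
    (hJneum : ∀ u v : ℝ × V,
      Jneum u v = J u v + J u (2 - v.1, v.2) + J u (-2 - v.1, v.2)) :
    ∀ u : ℝ × V, u.1 ∈ Set.Icc (-1 : ℝ) 1 →
      (∫ v in {p : ℝ × V | p.1 ∈ Set.Ioo (-1 : ℝ) 1}, Jneum u v) = 1 := by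
  intro u ⟨hu₁, hu₂⟩
  have hint : Integrable (J u) :=
    Integrable.of_integral_ne_zero (by rw [hprob]; exact one_ne_zero)
  have hsupp (v : ℝ × V) (hv : v ∉ Prod.fst ⁻¹' Ioo (-3) 3) : J u v = 0 := by
    rw [htrans]
    refine hrange _ (lt_abs.mpr ?_)
    simp only [mem_preimage, mem_Ioo, not_and_or, not_lt] at hv
    rcases hv with hv | hv
    · right; simp only [Prod.fst_sub]; linarith
    · left; simp only [Prod.fst_sub]; linarith
  have himages := setIntegral_fst_Ioo_add_reflections volume volume hint (a := -1) (b := 1)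
    (by norm_num)
  norm_num at himages
  calc ∫ v in {p : ℝ × V | p.1 ∈ Ioo (-1) 1}, Jneum u v
      = ∫ v in Prod.fst ⁻¹' Ioo (-1) 1, (J u v + J u (2 - v.1, v.2) + J u (-2 - v.1, v.2))
          ∂volume.prod volume := by simp only [hJneum]; rfl
    _ = ∫ v in Prod.fst ⁻¹' Ioo (-3) 3, J u v ∂volume.prod volume := himages
    _ = ∫ v, J u v := setIntegral_eq_integral_of_forall_compl_eq_zero hsupp
    _ = 1 := hprob u

/-- the Neumann Kac kernel is a probability kernel: for every
`u` in the closed cylinder, `∫_Λ J^neum(u,v) dv = 1`. -/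
theorem neumann_kac_probability_kernel
    {V : Type*} [AddCommGroup V] [MeasureSpace V]
    (J : ℝ × V → ℝ × V → ℝ)
    (hJ01 : ∀ u v, J u v ∈ Set.Icc (0 : ℝ) 1)
    (hsymm : ∀ u v, J u v = J v u)
    (htrans : ∀ u v, J u v = J 0 (v - u))
    (hrange : ∀ w : ℝ × V, 1 < |w.1| → J 0 w = 0)
    (hprob : ∀ u, (∫ v, J u v) = 1)
    (Jneum : ℝ × V → ℝ × V → ℝ)
    (hJneum : ∀ u v : ℝ × V,
      Jneum u v = J u v + J u (2 - v.1, v.2) + J u (-2 - v.1, v.2)) :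
    ∀ u : ℝ × V, u.1 ∈ Set.Icc (-1 : ℝ) 1 →
      (∫ v in {p : ℝ × V | p.1 ∈ Set.Ioo (-1 : ℝ) 1}, Jneum u v) = 1 :=
  neumann_kac_probability_kernel_general J htrans hrange hprob Jneum hJneum
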